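/- Fix γ > 1. Let U₋, U₀, U₊ ∈ ℝ³ be 1D Euler states in the admissible set G, let α₋ ≥ max{|v(U₋)| + a(U₋), |v(U₀)| + a(U₀)} and α₊ ≥ max{|v(U₀)| + a(U₀), |v(U₊)| + a(U₊)}, and let Δt, Δx > 0 with Δt(α₋ + α₊) ≤ Δx. Define the local Lax–Friedrichs fluxes F̂₊ = ½(F(U₀) + F(U₊)) − (α₊/2)(U₊ − U₀) and F̂₋ = ½(F(U₋) + F(U₀)) − (α₋/2)(U₀ − U₋). Then the updated average Uᴸ = U₀ − (Δt/Δx)(F̂₊ − F̂₋) belongs to G, i.e. it has positive density and positive pressure. -/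
import Mathlib
set_option maxHeartbeats 800000


/-- Pressure of a 1D Euler state `U = (ρ, m, E)` with adiabatic index `γ`. -/
noncomputable def eulerPressure1D (γ : ℝ) (U : Fin 3 → ℝ) : ℝ :=
  (γ - 1) * (U 2 - U 1 ^ 2 / (2 * U 0))

/-- Sound speed of a 1D Euler state. -/
noncomputable def eulerSound1D (γ : ℝ) (U : Fin 3 → ℝ) : ℝ :=
  Real.sqrt (γ * eulerPressure1D γ U / U 0)

/-- Flux of the 1D Euler equations. -/
noncomputable def eulerFlux1D (γ : ℝ) (U : Fin 3 → ℝ) : Fin 3 → ℝ :=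
  ![U 1, U 1 ^ 2 / U 0 + eulerPressure1D γ U, (U 2 + eulerPressure1D γ U) * U 1 / U 0]

/-- Admissible state set of the 1D Euler equations. -/
def eulerAdm1D (γ : ℝ) : Set (Fin 3 → ℝ) :=
  {U | 0 < U 0 ∧ 0 < eulerPressure1D γ U}

lemma key_mem (γ : ℝ) (hγ : 1 < γ) (U : Fin 3 → ℝ) (hU : U ∈ eulerAdm1D γ)
    (α : ℝ) (hα : |U 1 / U 0| + eulerSound1D γ U ≤ α) (s : ℝ) (hs : s = 1 ∨ s = -1) :
    α • U + s • eulerFlux1D γ U ∈ eulerAdm1D γ := by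
  obtain ⟨h0, hp⟩ := hU
  have hγ1 : (0:ℝ) < γ - 1 := by linarith
  set ρ := U 0 with hρdef
  set m := U 1 with hmdef
  set E := U 2 with hEdef
  set P := eulerPressure1D γ U with hPdef
  have hs2 : s ^ 2 = 1 := by rcases hs with h | h <;> simp [h]
  have haP : 0 < γ * P / ρ := by positivity
  have ha : eulerSound1D γ U = Real.sqrt (γ * P / ρ) := rfl
  have ha0 : 0 < Real.sqrt (γ * P / ρ) := Real.sqrt_pos.mpr haP
  have ha2 : Real.sqrt (γ * P / ρ) ^ 2 = γ * P / ρ := Real.sq_sqrt haP.le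
  rw [ha] at hα
  have hβa : Real.sqrt (γ * P / ρ) ≤ α + s * (m / ρ) := by
    have h1 : |m / ρ| + s * (m/ρ) ≥ 0 := by
      rcases hs with h | h <;> simp [h]
      · linarith [neg_abs_le (m/ρ)]
      · linarith [le_abs_self (m/ρ)]
    linarith
  have hβ : 0 < α + s * (m / ρ) := lt_of_lt_of_le ha0 hβa
  have hdens : 0 < α * ρ + s * m := by
    calc (0:ℝ) < (α + s * (m/ρ)) * ρ := mul_pos hβ h0
    _ = α * ρ + s * m := by field_simp
  have hβ2 : γ * P / ρ ≤ (α + s * (m/ρ)) ^ 2 := by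
    calc γ * P / ρ = Real.sqrt (γ*P/ρ) ^ 2 := ha2.symm
    _ ≤ (α + s * (m/ρ))^2 := by nlinarith [ha0.le]
  have hsq : γ * P * ρ ≤ (α * ρ + s * m) ^ 2 := by
    calc γ * P * ρ = (γ * P / ρ) * ρ ^ 2 := by field_simp
    _ ≤ (α + s * (m/ρ))^2 * ρ^2 := mul_le_mul_of_nonneg_right hβ2 (by positivity)
    _ = (α * ρ + s * m) ^ 2 := by field_simp
  refine ⟨?_, ?_⟩
  · simpa [eulerFlux1D, ← hρdef, ← hmdef] using hdens
  · have hEP : E = P / (γ - 1) + m ^ 2 / (2 * ρ) := by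
      rw [hPdef, eulerPressure1D, ← hρdef, ← hmdef, ← hEdef]; field_simp; ring
    have hW0 : (α • U + s • eulerFlux1D γ U) 0 = α * ρ + s * m := by
      simp [eulerFlux1D, ← hρdef, ← hmdef]
    have hW1 : (α • U + s • eulerFlux1D γ U) 1 = α * m + s * (m ^ 2 / ρ + P) := by
      simp [eulerFlux1D, ← hρdef, ← hmdef, ← hPdef]
    have hW2 : (α • U + s • eulerFlux1D γ U) 2 = α * E + s * ((E + P) * m / ρ) := by
      simp [eulerFlux1D, ← hρdef, ← hmdef, ← hEdef, ← hPdef]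
    rw [eulerPressure1D, hW0, hW1, hW2]
    have key : (γ-1) * ρ * (2 * (α*ρ + s*m) * (α*E + s*((E+P)*m/ρ))
          - (α*m + s*(m^2/ρ + P))^2) = 2*(α*ρ+s*m)^2*P - (γ-1)*ρ*P^2 := by
      rw [hEP]
      rcases hs with h | h <;> subst h <;> (field_simp; ring)
    have hr : 0 < 2*(α*ρ+s*m)^2*P - (γ-1)*ρ*P^2 := by
      nlinarith [mul_le_mul_of_nonneg_right hsq (by positivity : (0:ℝ) ≤ 2*P),
        mul_pos (mul_pos hp hp) h0]
    have hpos : 0 < 2 * (α*ρ + s*m) * (α*E + s*((E+P)*m/ρ)) - (α*m + s*(m^2/ρ + P))^2 :=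
      (mul_pos_iff_of_pos_left (mul_pos hγ1 h0)).mp (key ▸ hr)
    have : 0 < (α*E + s*((E+P)*m/ρ)) - (α*m + s*(m^2/ρ + P))^2 / (2*(α*ρ + s*m)) := by
      rw [sub_pos, div_lt_iff₀ (by linarith)]
      linarith
    exact mul_pos hγ1 this

lemma smul_mem_adm (γ t : ℝ) (ht : 0 < t) (U : Fin 3 → ℝ)
    (hU : U ∈ eulerAdm1D γ) : t • U ∈ eulerAdm1D γ := by
  obtain ⟨h0, hp⟩ := hU
  refine ⟨by simpa using mul_pos ht h0, ?_⟩
  have hρ : (U 0) ≠ 0 := ne_of_gt h0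
  have : eulerPressure1D γ (t • U) = t * eulerPressure1D γ U := by
    simp only [eulerPressure1D, Pi.smul_apply, smul_eq_mul]
    field_simp
  rw [this]; exact mul_pos ht hp

lemma add_mem_adm (γ : ℝ) (hγ : 1 < γ) (U V : Fin 3 → ℝ)
    (hU : U ∈ eulerAdm1D γ) (hV : V ∈ eulerAdm1D γ) : U + V ∈ eulerAdm1D γ := by
  obtain ⟨h0, hp⟩ := hU
  obtain ⟨h0', hp'⟩ := hV
  have hγ1 : (0:ℝ) < γ - 1 := by linarith
  refine ⟨by simpa using add_pos h0 h0', ?_⟩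
  simp only [eulerPressure1D, Pi.add_apply] at *
  have q1 : 0 < U 2 - U 1 ^ 2 / (2 * U 0) := by
    by_contra h; push_neg at h; nlinarith
  have q2 : 0 < V 2 - V 1 ^ 2 / (2 * V 0) := by
    by_contra h; push_neg at h; nlinarith
  have r1 : U 1 ^ 2 < U 2 * (2 * U 0) := by
    rw [sub_pos, div_lt_iff₀ (by linarith)] at q1; exact q1
  have r2 : V 1 ^ 2 < V 2 * (2 * V 0) := by
    rw [sub_pos, div_lt_iff₀ (by linarith)] at q2; exact q2
  have : 0 < (U 2 + V 2) - (U 1 + V 1) ^ 2 / (2 * (U 0 + V 0)) := by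
    rw [sub_pos, div_lt_iff₀ (by linarith)]
    nlinarith [sq_nonneg (U 1 * V 0 - V 1 * U 0), mul_pos h0 h0',
      mul_lt_mul_of_pos_right r1 h0', mul_lt_mul_of_pos_right r2 h0]
  exact mul_pos hγ1 this

theorem llf_scheme_euler1D_bound_preserving
    (γ : ℝ) (hγ : 1 < γ) (Um U₀ Up : Fin 3 → ℝ)
    (hUm : Um ∈ eulerAdm1D γ) (hU₀ : U₀ ∈ eulerAdm1D γ) (hUp : Up ∈ eulerAdm1D γ)
    (αm αp : ℝ)
    (hαm : max (|Um 1 / Um 0| + eulerSound1D γ Um)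
               (|U₀ 1 / U₀ 0| + eulerSound1D γ U₀) ≤ αm)
    (hαp : max (|U₀ 1 / U₀ 0| + eulerSound1D γ U₀)
               (|Up 1 / Up 0| + eulerSound1D γ Up) ≤ αp)
    (Δt Δx : ℝ) (hΔt : 0 < Δt) (hΔx : 0 < Δx) (hCFL : Δt * (αm + αp) ≤ Δx) :
    U₀ - (Δt / Δx) •
        (((2⁻¹ : ℝ) • (eulerFlux1D γ U₀ + eulerFlux1D γ Up) - (αp / 2) • (Up - U₀)) -
         ((2⁻¹ : ℝ) • (eulerFlux1D γ Um + eulerFlux1D γ U₀) - (αm / 2) • (U₀ - Um)))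
      ∈ eulerAdm1D γ := by
  set lam := Δt / Δx with hlam
  have hlam0 : 0 < lam := div_pos hΔt hΔx
  have hlam1 : lam * (αm + αp) ≤ 1 := by
    rw [hlam, div_mul_eq_mul_div, div_le_one hΔx]; exact hCFL
  have hc0 : 0 < 1 - lam * (αm + αp) / 2 := by linarith
  have hWp : αp • Up + (-1 : ℝ) • eulerFlux1D γ Up ∈ eulerAdm1D γ :=
    key_mem γ hγ Up hUp αp (le_trans (le_max_right _ _) hαp) (-1) (Or.inr rfl)
  have hWm : αm • Um + (1 : ℝ) • eulerFlux1D γ Um ∈ eulerAdm1D γ :=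
    key_mem γ hγ Um hUm αm (le_trans (le_max_left _ _) hαm) 1 (Or.inl rfl)
  have hdecomp : U₀ - lam •
        (((2⁻¹ : ℝ) • (eulerFlux1D γ U₀ + eulerFlux1D γ Up) - (αp / 2) • (Up - U₀)) -
         ((2⁻¹ : ℝ) • (eulerFlux1D γ Um + eulerFlux1D γ U₀) - (αm / 2) • (U₀ - Um)))
      = (1 - lam * (αm + αp) / 2) • U₀
        + ((lam / 2) • (αp • Up + (-1 : ℝ) • eulerFlux1D γ Up)
          + (lam / 2) • (αm • Um + (1 : ℝ) • eulerFlux1D γ Um)) := by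
    funext i
    simp only [Pi.sub_apply, Pi.add_apply, Pi.smul_apply, smul_eq_mul]
    ring
  rw [hdecomp]
  exact add_mem_adm γ hγ _ _
    (smul_mem_adm γ _ hc0 _ hU₀)
    (add_mem_adm γ hγ _ _
      (smul_mem_adm γ _ (by linarith) _ hWp)
      (smul_mem_adm γ _ (by linarith) _ hWm))
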